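/- For every well-typed term s there exists a well-typed term t such that s and t are lambda equivalent, t is β-normal (no subterm of t is a β-redex (λx.u)v), and every variable occurring free in t occurs free in s. -/

import Mathlib

namespace PTT


/-- Simple types over a single base type `B`. -/
inductive Ty : Type
  | base : Ty
  | arrow : Ty → Ty → Ty
deriving DecidableEq

/-- Names: the constants `⊥` and `→`, and variables (an index together with a type). -/
inductive Name : Type
  | bot : Name
  | imp : Name
  | var : ℕ → Ty → Name
deriving DecidableEq

/-- The type of a name. -/
def Name.ty : Name → Ty
  | .bot => .base
  | .imp => .arrow .base (.arrow .base .base)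
  | .var _ σ => σ

/-- Terms: names, abstraction over a variable, application. -/
inductive Tm : Type
  | name : Name → Tm
  | lam : ℕ → Ty → Tm → Tm
  | app : Tm → Tm → Tm
deriving DecidableEq

/-- The term `⊥`. -/
def botTm : Tm := .name .bot

/-- The variable `(n, σ)` as a term. -/
def vr (n : ℕ) (σ : Ty) : Tm := .name (.var n σ)

/-- Implication `s → t`. -/
def impTm (s t : Tm) : Tm := .app (.app (.name .imp) s) t

/-- `⊤ := ⊥ → ⊥`. -/
def topTm : Tm := impTm botTm botTm

/-- `¬ s := s → ⊥`. -/
def negTm (s : Tm) : Tm := impTm s botTm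

/-- `s ∨ t := (s → t) → t`. -/
def orTm (s t : Tm) : Tm := impTm (impTm s t) t

/-- `s ∧ t := ¬(¬s ∨ ¬t)`. -/
def andTm (s t : Tm) : Tm := negTm (orTm (negTm s) (negTm t))

/-- `s ≡ t := (s → t) ∧ (t → s)`. -/
def equivTm (s t : Tm) : Tm := andTm (impTm s t) (impTm t s)

/-- The typing relation. -/
inductive HasTy : Tm → Ty → Prop
  | name (x : Name) : HasTy (.name x) x.ty
  | lam {n σ s τ} : HasTy s τ → HasTy (.lam n σ s) (.arrow σ τ)
  | app {s t σ τ} : HasTy s (.arrow σ τ) → HasTy t σ → HasTy (.app s t) τ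

/-- Free variables of a term. -/
def fv : Tm → Finset (ℕ × Ty)
  | .name (.var n σ) => {(n, σ)}
  | .name _ => ∅
  | .lam n σ s => (fv s).erase (n, σ)
  | .app s t => fv s ∪ fv t

/-- A term is closed if it has no free variables. -/
def Closed (s : Tm) : Prop := fv s = ∅

/-- Capture-free parallel substitution (bound variables are renamed). -/
def substAux (ρ : ℕ × Ty → Tm) : Tm → Tm
  | .name (.var n σ) => ρ (n, σ)
  | .name x => .name x
  | .app s t => .app (substAux ρ s) (substAux ρ t)
  | .lam n σ s =>
      let used : Finset ℕ :=
        ((fv s).erase (n, σ)).biUnion (fun p => (fv (ρ p)).image Prod.fst)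
      let m : ℕ := used.sup id + 1
      .lam m σ (substAux (Function.update ρ (n, σ) (vr m σ)) s)

/-- Capture-free substitution `s[(n,σ) := t]`. -/
def subst (s : Tm) (n : ℕ) (σ : Ty) (t : Tm) : Tm :=
  substAux (Function.update (fun p => vr p.1 p.2) (n, σ) t) s

/-- Contexts: terms with exactly one hole (possibly under binders). -/
inductive Ctx : Type
  | hole : Ctx
  | lam : ℕ → Ty → Ctx → Ctx
  | appL : Ctx → Tm → Ctx
  | appR : Tm → Ctx → Ctx

/-- Filling the hole of a context with a term (capturing is allowed). -/
def Ctx.fill : Ctx → Tm → Tm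
  | .hole, s => s
  | .lam n σ C, s => .lam n σ (C.fill s)
  | .appL C t, s => .app (C.fill s) t
  | .appR t C, s => .app t (C.fill s)

/-- `C` captures the variable `p` if the hole of `C` lies below a binder for `p`. -/
def Ctx.captures : Ctx → ℕ × Ty → Prop
  | .hole, _ => False
  | .lam n σ C, p => p = (n, σ) ∨ C.captures p
  | .appL C _, p => C.captures p
  | .appR _ C, p => C.captures p

/-- `C` is admissible for `A` if it captures no variable free in `A`. -/
def Ctx.Admissible (C : Ctx) (A : Finset Tm) : Prop :=
  ∀ p ∈ A.biUnion fv, ¬ C.captures p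

/-- `s` is a subterm of `t`. -/
def Subterm (s t : Tm) : Prop := ∃ C : Ctx, C.fill s = t

/-- β-redexes. -/
def IsBetaRedex : Tm → Prop
  | .app (.lam _ _ _) _ => True
  | _ => False

/-- A term is β-normal if none of its subterms is a β-redex. -/
def BetaNormal (t : Tm) : Prop := ∀ s, Subterm s t → ¬ IsBetaRedex s

/-- Lambda equivalence: the least equivalence on well-typed terms containing
α-, β-, η-conversion and closed under arbitrary contexts. -/
inductive LamEq : Tm → Tm → Prop
  | refl {s σ} : HasTy s σ → LamEq s s
  | symm {s t} : LamEq s t → LamEq t s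
  | trans {s t u} : LamEq s t → LamEq t u → LamEq s u
  | alpha {n m σ s τ} : HasTy (.lam n σ s) τ → (m, σ) ∉ fv s →
      LamEq (.lam n σ s) (.lam m σ (subst s n σ (vr m σ)))
  | beta {n σ s t τ} : HasTy (.app (.lam n σ s) t) τ →
      LamEq (.app (.lam n σ s) t) (subst s n σ t)
  | eta {n σ s τ} : HasTy (.lam n σ (.app s (vr n σ))) τ → (n, σ) ∉ fv s →
      LamEq (.lam n σ (.app s (vr n σ))) s
  | ctx {s t σ} (C : Ctx) : LamEq s t → HasTy (C.fill s) σ → LamEq (C.fill s) (C.fill t)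

/-- The standard set-theoretic interpretation of types: `B` is interpreted as the
two truth values (`Bool`), functional types as full function spaces. -/
def Ty.sem : Ty → Type
  | .base => Bool
  | .arrow σ τ => σ.sem → τ.sem

def Ty.semDefault : (σ : Ty) → σ.sem
  | .base => false
  | .arrow _ τ => fun _ => τ.semDefault

instance (σ : Ty) : Inhabited σ.sem := ⟨σ.semDefault⟩

noncomputable instance Ty.semFintype : (σ : Ty) → Fintype σ.sem
  | .base => inferInstanceAs (Fintype Bool)
  | .arrow σ τ =>
      letI := Ty.semFintype σ
      letI := Ty.semFintype τ
      letI := Classical.decEq σ.sem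
      inferInstanceAs (Fintype (σ.sem → τ.sem))

def Ty.semCast {σ τ : Ty} (h : σ = τ) (v : σ.sem) : τ.sem := h ▸ v

/-- An interpretation assigns to every variable a value of the corresponding type
(the constants `⊥` and `→` have their values fixed). -/
def Interp : Type := ℕ → (σ : Ty) → σ.sem

def Interp.update (I : Interp) (n : ℕ) (σ : Ty) (v : σ.sem) : Interp :=
  fun m τ => if h : m = n ∧ τ = σ then Ty.semCast h.2.symm v else I m τ

/-- Type inference. -/
def typeOf : Tm → Option Ty
  | .name x => some x.ty
  | .lam _ σ s => (typeOf s).map (Ty.arrow σ)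
  | .app s t =>
      match typeOf s, typeOf t with
      | some (.arrow σ τ), some σ' => if σ = σ' then some τ else none
      | _, _ => none

/-- The canonical extension `Î` of an interpretation to all terms: `eval I s σ`
is the value of `s` at type `σ` (on well-typed terms this is the usual
denotation; junk default values are used at type mismatches). -/
def eval (I : Interp) : Tm → (σ : Ty) → σ.sem
  | .name (.var n τ), σ => if h : τ = σ then Ty.semCast h (I n τ) else default
  | .name .bot, σ =>
      match σ with
      | .base => false
      | _ => default
  | .name .imp, σ =>
      match σ with
      | .arrow .base (.arrow .base .base) => fun a b => !a || b
      | _ => default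
  | .app s t, σ =>
      match typeOf t with
      | some τ => eval I s (.arrow τ σ) (eval I t τ)
      | none => default
  | .lam n τ s, σ =>
      match σ with
      | .base => default
      | .arrow σ₁ σ₂ =>
          if h : σ₁ = τ then
            fun a => eval (I.update n τ (Ty.semCast h a)) s σ₂
          else default

/-- `I` satisfies the formula `s` if `Î s = 1`. -/
def Satisfies (I : Interp) (s : Tm) : Prop := eval I s .base = true

/-- A formula is valid if every interpretation satisfies it. -/
def ValidFml (s : Tm) : Prop := ∀ I : Interp, Satisfies I s

/-- A sequent `A ⇒ s` is valid if every interpretation satisfying `A` satisfies `s`. -/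
def ValidSeq (A : Finset Tm) (s : Tm) : Prop :=
  ∀ I : Interp, (∀ t ∈ A, Satisfies I t) → Satisfies I s

/-- Finite disjunction (the empty disjunction is `⊥`). -/
def orList : List Tm → Tm
  | [] => botTm
  | [s] => s
  | s :: l => orTm s (orList l)

/-- Finite conjunction (the empty conjunction is `⊤`). -/
def andList : List Tm → Tm
  | [] => topTm
  | [s] => s
  | s :: l => andTm s (andList l)

/-- The argument types of a type (every type has the form `σ₁…σₙB`). -/
def Ty.args : Ty → List Ty
  | .base => []
  | .arrow σ τ => σ :: τ.args

/-- Tuples of values along a list of types. -/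
def Tup : List Ty → Type
  | [] => PUnit
  | σ :: l => σ.sem × Tup l

noncomputable instance TupFintype : (l : List Ty) → Fintype (Tup l)
  | [] => inferInstanceAs (Fintype PUnit)
  | σ :: l =>
      letI := TupFintype l
      inferInstanceAs (Fintype (σ.sem × Tup l))

/-- Applying a function value to a tuple of arguments (the result type is `B`). -/
def Ty.applyTup : (σ : Ty) → σ.sem → Tup σ.args → Bool
  | .base, a, _ => a
  | .arrow _ τ, f, p => τ.applyTup (f p.1) p.2

/-- Quote/identity data for each type in a list: a quote function and the term `≐`. -/
def ArgData : List Ty → Type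
  | [] => PUnit
  | σ :: l => ((σ.sem → Tm) × Tm) × ArgData l

/-- The conjunction list `x_k ≐_{σ_k} (↓_{σ_k} b_k), …` for a tuple `b`. -/
def eqConj : (l : List Ty) → ArgData l → ℕ → Tup l → List Tm
  | [], _, _, _ => []
  | σ :: l, (d, ds), k, (b, bs) =>
      (.app (.app d.2 (vr k σ)) (d.1 b)) :: eqConj l ds (k + 1) bs

/-- `λ x_k : σ_k. …` binding one variable for each type in the list. -/
def mkLams : (l : List Ty) → ℕ → Tm → Tm
  | [], _, body => body
  | σ :: l, k, body => .lam k σ (mkLams l (k + 1) body)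

/-- The body of the quote term
`↓_{σ₁…σₙB} a := λx₁…xₙ. ⋁_{b₁…bₙ, a b₁…bₙ = 1} ⋀_j x_j ≐_{σ_j} (↓_{σ_j} b_j)`. -/
noncomputable def quoteBodyAux (σ : Ty) (ad : ArgData σ.args) (a : σ.sem) : Tm :=
  mkLams σ.args 0 (orList
    ((((Finset.univ : Finset (Tup σ.args)).toList.filter
        (fun b => σ.applyTup a b))).map
      (fun b => andList (eqConj σ.args ad 0 b))))

/-- `∀σ := λf. ⋀_{a ∈ Bσ} f (↓σ a)`, given the quote function for `σ`. -/
noncomputable def allTmAux (σ : Ty) (q : σ.sem → Tm) : Tm :=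
  .lam 0 (.arrow σ .base)
    (andList (((Finset.univ : Finset σ.sem).toList).map
      (fun a => .app (vr 0 (.arrow σ .base)) (q a))))

mutual
  /-- The quote function `↓σ` together with the identity term `≐σ`. -/
  noncomputable def quoteEq : (σ : Ty) → ((σ.sem → Tm) × Tm)
    | .base =>
        (fun a => quoteBodyAux .base PUnit.unit a,
         .lam 0 .base (.lam 1 .base (equivTm (vr 0 .base) (vr 1 .base))))
    | .arrow σ τ =>
        (fun a => quoteBodyAux (.arrow σ τ) ((quoteEq σ, argData τ) : ArgData (σ :: τ.args)) a,
         .lam 0 (.arrow σ τ) (.lam 1 (.arrow σ τ)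
           (.app (allTmAux σ (quoteEq σ).1)
             (.lam 2 σ
               (.app (.app (quoteEq τ).2
                  (.app (vr 0 (.arrow σ τ)) (vr 2 σ)))
                (.app (vr 1 (.arrow σ τ)) (vr 2 σ)))))))
  /-- Quote/identity data for all argument types of a type. -/
  noncomputable def argData : (σ : Ty) → ArgData σ.args
    | .base => PUnit.unit
    | .arrow σ τ => ((quoteEq σ, argData τ) : ArgData (σ :: τ.args))
end

/-- The quote function `↓σ : Bσ → Λ`. -/
noncomputable def quote (σ : Ty) (a : σ.sem) : Tm := (quoteEq σ).1 a

/-- The term `≐σ : σσB` denoting the identity predicate on `Bσ`. -/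
noncomputable def eqTm (σ : Ty) : Tm := (quoteEq σ).2

/-- The term `∀σ : (σB)B`. -/
noncomputable def allTm (σ : Ty) : Tm := allTmAux σ (quote σ)


/-- Propositional formulas: `s ::= x | ⊥ | s → s` with `x` a variable of type `B`. -/
inductive Propositional : Tm → Prop
  | var (n : ℕ) : Propositional (vr n .base)
  | bot : Propositional botTm
  | imp {s t} : Propositional s → Propositional t → Propositional (impTm s t)

/-- A type-respecting substitution of terms for variables. -/
def IsSubstitution (ρ : ℕ × Ty → Tm) : Prop := ∀ n σ, HasTy (ρ (n, σ)) σ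

/-- A formula is tautologous if it is a substitution instance of a tautology
(a valid propositional formula). -/
def Tautologous (s : Tm) : Prop :=
  ∃ t ρ, Propositional t ∧ ValidFml t ∧ IsSubstitution ρ ∧ s = substAux ρ t

/-- The proof system: Triv, Weak, Ded, MP, DN, Lam and Boolean replacement (BR).
Sequents consist of a finite set of formulas and a formula. -/
inductive Ded : Finset Tm → Tm → Prop
  | triv {A s} : (∀ t ∈ A, HasTy t .base) → HasTy s .base → Ded (insert s A) s
  | weak {A s t} : HasTy s .base → Ded A t → Ded (insert s A) t
  | ded {A s t} : Ded (insert s A) t → Ded A (impTm s t)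
  | mp {A s t} : Ded A (impTm s t) → Ded A s → Ded A t
  | dn {A s} : Ded A (negTm (negTm s)) → Ded A s
  | lam {A s t} : Ded A s → LamEq s t → HasTy t .base → Ded A t
  | br {A s t} (C : Ctx) : C.Admissible A → Ded A (equivTm s t) →
      Ded A (C.fill s) → HasTy (C.fill t) .base → Ded A (C.fill t)

/-! Named β-reduction is simulated, step for step, by β-reduction of de Bruijn terms, on which
substitution is a plain structural recursion and composes by the usual equations. Simply typed
de Bruijn terms are strongly normalizing by Tait's reducibility argument, hence so is named
β-reduction on well-typed terms. Reducing a well-typed term until no step applies yields a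
β-normal term; each step preserves the type, does not create free variables, and is an instance
of `LamEq.beta` inside a context. -/

theorem _root_.Acc.exists_reflTransGen_forall_not {α : Type*} {r : α → α → Prop} {a : α}
    (ha : Acc (flip r) a) : ∃ b, Relation.ReflTransGen r a b ∧ ∀ c, ¬ r b c := by
  induction ha with
  | intro a _ ih =>
    by_cases h : ∃ c, r a c
    · obtain ⟨c, hac⟩ := h
      obtain ⟨b, hcb, hb⟩ := ih c hac
      exact ⟨b, .head hac hcb, hb⟩
    · exact ⟨a, .refl, not_exists.mp h⟩

/-- The translation from `Tm` only has to simulate β-steps, so it may identify the two constants,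
and all free variables (see `idx`). -/
inductive DB : Type
  | bvar : ℕ → DB
  | const : DB
  | lam : DB → DB
  | app : DB → DB → DB

namespace DB

def liftR (r : ℕ → ℕ) : ℕ → ℕ
  | 0 => 0
  | n + 1 => r n + 1

def rename (r : ℕ → ℕ) : DB → DB
  | .bvar n => .bvar (r n)
  | .const => .const
  | .lam d => .lam (rename (liftR r) d)
  | .app s t => .app (rename r s) (rename r t)

def consS (u : DB) (ρ : ℕ → DB) : ℕ → DB
  | 0 => u
  | n + 1 => ρ n

def liftS (ρ : ℕ → DB) : ℕ → DB := consS (.bvar 0) (rename Nat.succ ∘ ρ)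

def subst (ρ : ℕ → DB) : DB → DB
  | .bvar n => ρ n
  | .const => .const
  | .lam d => .lam (subst (liftS ρ) d)
  | .app s t => .app (subst ρ s) (subst ρ t)

@[simp]
lemma consS_comp_succ (u : DB) (ρ : ℕ → DB) : consS u ρ ∘ Nat.succ = ρ := rfl

def sub0 (d u : DB) : DB := subst (consS u .bvar) d

lemma liftR_comp (r₂ r₁ : ℕ → ℕ) : liftR (r₂ ∘ r₁) = liftR r₂ ∘ liftR r₁ := by
  funext n; cases n <;> rfl

lemma rename_rename (r₂ r₁ : ℕ → ℕ) (d : DB) :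
    rename r₂ (rename r₁ d) = rename (r₂ ∘ r₁) d := by
  induction d generalizing r₂ r₁ <;> simp [rename, liftR_comp, *]

lemma liftS_comp_liftR (ρ : ℕ → DB) (r : ℕ → ℕ) : liftS (ρ ∘ r) = liftS ρ ∘ liftR r := by
  funext n; cases n <;> rfl

lemma subst_rename (ρ : ℕ → DB) (r : ℕ → ℕ) (d : DB) :
    subst ρ (rename r d) = subst (ρ ∘ r) d := by
  induction d generalizing ρ r <;> simp [rename, subst, liftS_comp_liftR, *]

lemma liftS_rename (r : ℕ → ℕ) (ρ : ℕ → DB) :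
    liftS (rename r ∘ ρ) = rename (liftR r) ∘ liftS ρ := by
  funext n; cases n with
  | zero => rfl
  | succ n => simp only [liftS, consS, Function.comp, rename_rename]; rfl

lemma rename_subst (r : ℕ → ℕ) (ρ : ℕ → DB) (d : DB) :
    rename r (subst ρ d) = subst (rename r ∘ ρ) d := by
  induction d generalizing r ρ <;> simp [rename, subst, liftS_rename, *]

lemma liftS_subst (ρ₂ ρ₁ : ℕ → DB) :
    liftS (subst ρ₂ ∘ ρ₁) = subst (liftS ρ₂) ∘ liftS ρ₁ := by
  funext n; cases n with
  | zero => rfl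
  | succ n => simp only [liftS, consS, Function.comp, rename_subst, subst_rename]; rfl

lemma subst_subst (ρ₂ ρ₁ : ℕ → DB) (d : DB) :
    subst ρ₂ (subst ρ₁ d) = subst (subst ρ₂ ∘ ρ₁) d := by
  induction d generalizing ρ₂ ρ₁ <;> simp [subst, liftS_subst, *]

lemma liftS_bvar : liftS .bvar = .bvar := by
  funext n; cases n <;> rfl

@[simp]
lemma subst_bvar (d : DB) : subst .bvar d = d := by
  induction d <;> simp [subst, liftS_bvar, *]

lemma sub0_subst_liftS (ρ : ℕ → DB) (d u : DB) :
    sub0 (subst (liftS ρ) d) u = subst (consS u ρ) d := by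
  rw [sub0, subst_subst]
  congr 1
  funext n; cases n with
  | zero => rfl
  | succ n => simp [liftS, consS, subst_rename]

lemma subst_sub0 (ρ : ℕ → DB) (b u : DB) :
    subst ρ (sub0 b u) = sub0 (subst (liftS ρ) b) (subst ρ u) := by
  rw [sub0_subst_liftS, sub0, subst_subst]
  congr 1
  funext n; cases n <;> rfl

inductive Step : DB → DB → Prop
  | beta {b u} : Step (.app (.lam b) u) (sub0 b u)
  | lam {b b'} : Step b b' → Step (.lam b) (.lam b')
  | appL {s s' t} : Step s s' → Step (.app s t) (.app s' t)
  | appR {s t t'} : Step t t' → Step (.app s t) (.app s t')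

lemma Step.subst {d d' : DB} (ρ : ℕ → DB) (h : Step d d') :
    Step (d.subst ρ) (d'.subst ρ) := by
  induction h generalizing ρ with
  | beta => rw [subst_sub0]; exact .beta
  | lam _ ih => exact .lam (ih _)
  | appL _ ih => exact .appL (ih _)
  | appR _ ih => exact .appR (ih _)

abbrev SN (d : DB) : Prop := Acc (flip Step) d

lemma SN.of_subst {ρ : ℕ → DB} {d : DB} (h : SN (d.subst ρ)) : SN d :=
  Subrelation.accessible (fun h => h.subst ρ) (InvImage.accessible (DB.subst ρ) h)

lemma SN.of_app {d u : DB} (h : SN (.app d u)) : SN d :=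
  Subrelation.accessible (fun h => Step.appL h) (InvImage.accessible (DB.app · u) h)

def Neutral : DB → Prop
  | .lam _ => False
  | _ => True

def Red : Ty → DB → Prop
  | .base, d => SN d
  | .arrow σ τ, d => ∀ u, Red σ u → Red τ (.app d u)

/-- Girard's conditions CR1–CR3. They are proved together because CR1 at `σ → τ` applies the
term to a variable, which is reducible at `σ` by CR3. -/
lemma red_candidate (σ : Ty) :
    (∀ d, Red σ d → SN d) ∧ (∀ d d', Red σ d → Step d d' → Red σ d') ∧
      (∀ d, Neutral d → (∀ d', Step d d' → Red σ d') → Red σ d) := by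
  induction σ with
  | base => exact ⟨fun _ h => h, fun _ _ h hs => h.inv hs, fun d _ h => ⟨d, h⟩⟩
  | arrow σ τ ihσ ihτ =>
    obtain ⟨sn_σ, step_σ, neutral_σ⟩ := ihσ
    obtain ⟨sn_τ, step_τ, neutral_τ⟩ := ihτ
    have red_bvar0 : Red σ (.bvar 0) := neutral_σ _ trivial fun _ hs => nomatch hs
    refine ⟨fun d h => (sn_τ _ (h _ red_bvar0)).of_app,
      fun d d' h hs u hu => step_τ _ _ (h u hu) (.appL hs), fun d hd h u hu => ?_⟩
    -- induction on `u` along `Step`, which terminates by CR1 for `σ`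
    induction (sn_σ u hu : SN u) with
    | intro u _ ihu =>
      refine neutral_τ _ trivial fun e he => ?_
      cases he with
      | beta => exact hd.elim
      | appL hs => exact h _ hs _ hu
      | appR hs => exact ihu _ hs (step_σ _ _ hu hs)

lemma Red.sn {σ : Ty} {d : DB} (h : Red σ d) : SN d := (red_candidate σ).1 d h

lemma Red.step {σ : Ty} {d d' : DB} (h : Red σ d) (hs : Step d d') : Red σ d' :=
  (red_candidate σ).2.1 d d' h hs

lemma red_of_neutral {σ : Ty} {d : DB} (hd : Neutral d) (h : ∀ d', Step d d' → Red σ d') :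
    Red σ d :=
  (red_candidate σ).2.2 d hd h

lemma red_bvar (σ : Ty) (n : ℕ) : Red σ (.bvar n) :=
  red_of_neutral trivial fun _ hs => nomatch hs

lemma red_const (σ : Ty) : Red σ .const :=
  red_of_neutral trivial fun _ hs => nomatch hs

lemma red_lam {σ τ : Ty} {b : DB} (hb : SN b) (h : ∀ v, Red σ v → Red τ (sub0 b v)) :
    Red (.arrow σ τ) (.lam b) := by
  intro u hu
  induction hb generalizing u with
  | intro b _ ihb =>
    induction (hu.sn : SN u) with
    | intro u _ ihu =>
      refine red_of_neutral trivial fun e he => ?_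
      cases he with
      | beta => exact h _ hu
      | appR hs => exact ihu _ hs (hu.step hs)
      | appL hs =>
        cases hs with
        | lam hb' => exact ihb _ hb' (fun v hv => (h v hv).step (hb'.subst _)) u hu

end DB

/-- `Γ` lists the enclosing binders, innermost first; all free variables get the first index
beyond `Γ`. -/
def idx : List (ℕ × Ty) → ℕ × Ty → ℕ
  | [], _ => 0
  | q :: Γ, p => if p = q then 0 else idx Γ p + 1

def toDB (Γ : List (ℕ × Ty)) : Tm → DB
  | .name (.var n σ) => .bvar (idx Γ (n, σ))
  | .name .bot => .const
  | .name .imp => .const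
  | .lam n σ s => .lam (toDB ((n, σ) :: Γ) s)
  | .app s t => .app (toDB Γ s) (toDB Γ t)

/-- The renaming of de Bruijn indices that makes room for a new binder at depth `k`. -/
def liftN (k : ℕ) (i : ℕ) : ℕ := if i < k then i else i + 1

lemma liftN_zero : liftN 0 = Nat.succ := by
  funext i; simp [liftN]

lemma liftN_succ_succ (k i : ℕ) : liftN (k + 1) (i + 1) = liftN k i + 1 := by
  simp only [liftN]; split_ifs <;> omega

lemma liftR_liftN (k : ℕ) : DB.liftR (liftN k) = liftN (k + 1) := by
  funext i; cases i with
  | zero => simp [DB.liftR, liftN]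
  | succ i => rw [liftN_succ_succ]; rfl

lemma idx_append_cons {Γ₁ Γ₂ : List (ℕ × Ty)} {q p : ℕ × Ty} (h : p ∈ Γ₁ ∨ p ≠ q) :
    idx (Γ₁ ++ q :: Γ₂) p = liftN Γ₁.length (idx (Γ₁ ++ Γ₂) p) := by
  induction Γ₁ with
  | nil => simp_all [idx, liftN_zero]
  | cons r Γ₁ ih =>
    by_cases hpr : p = r
    · simp [idx, hpr, liftN]
    · simp_all [idx, liftN_succ_succ]

lemma toDB_append_cons (u : Tm) {Γ₁ Γ₂ : List (ℕ × Ty)} {q : ℕ × Ty} (h : q ∈ Γ₁ ∨ q ∉ fv u) :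
    toDB (Γ₁ ++ q :: Γ₂) u = (toDB (Γ₁ ++ Γ₂) u).rename (liftN Γ₁.length) := by
  induction u generalizing Γ₁ with
  | name x =>
    cases x with
    | bot => rfl
    | imp => rfl
    | var n σ =>
      refine congrArg DB.bvar (idx_append_cons ?_)
      by_cases hq : (n, σ) = q
      · subst hq; simpa [fv] using h
      · exact Or.inr hq
  | lam n σ s ih =>
    have h' : q ∈ (n, σ) :: Γ₁ ∨ q ∉ fv s := by
      by_cases hq : q = (n, σ)
      · simp [hq]
      · simpa [fv, hq] using h
    simp only [toDB, DB.rename, liftR_liftN]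
    exact congrArg DB.lam (ih h')
  | app s t ihs iht =>
    simp only [fv, Finset.mem_union, not_or] at h
    simp only [toDB, DB.rename]
    rw [ihs (h.imp_right And.left), iht (h.imp_right And.right)]

lemma toDB_cons {u : Tm} {q : ℕ × Ty} (Γ : List (ℕ × Ty)) (h : q ∉ fv u) :
    toDB (q :: Γ) u = (toDB Γ u).rename Nat.succ := by
  simpa [liftN_zero] using toDB_append_cons u (Γ₁ := []) (Γ₂ := Γ) (Or.inr h)

/-- The name that `substAux` gives the binder of a substituted abstraction. -/
def freshN (ρ : ℕ × Ty → Tm) (n : ℕ) (σ : Ty) (s : Tm) : ℕ :=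
  (((fv s).erase (n, σ)).biUnion (fun p => (fv (ρ p)).image Prod.fst)).sup id + 1

lemma substAux_lam (ρ : ℕ × Ty → Tm) (n : ℕ) (σ : Ty) (s : Tm) :
    substAux ρ (.lam n σ s) =
      .lam (freshN ρ n σ s) σ
        (substAux (Function.update ρ (n, σ) (vr (freshN ρ n σ s) σ)) s) := rfl

lemma freshN_not_mem_fv {ρ : ℕ × Ty → Tm} {n : ℕ} {σ : Ty} {s : Tm} {p : ℕ × Ty}
    (hp : p ∈ (fv s).erase (n, σ)) (τ : Ty) : (freshN ρ n σ s, τ) ∉ fv (ρ p) := by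
  intro hc
  have hmem : freshN ρ n σ s ∈
      ((fv s).erase (n, σ)).biUnion (fun p => (fv (ρ p)).image Prod.fst) :=
    Finset.mem_biUnion.mpr ⟨p, hp, Finset.mem_image.mpr ⟨_, hc, rfl⟩⟩
  have := Finset.le_sup (f := id) hmem
  simp only [id, freshN] at this
  omega

/-- The fresh binder name chosen by `substAux` is what makes `toDB_cons` applicable under
the abstraction. -/
lemma toDB_substAux (s : Tm) {Δ Γ : List (ℕ × Ty)} {ρ : ℕ × Ty → Tm} {dρ : ℕ → DB}
    (h : ∀ p ∈ fv s, dρ (idx Δ p) = toDB Γ (ρ p)) :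
    toDB Γ (substAux ρ s) = (toDB Δ s).subst dρ := by
  induction s generalizing Δ Γ ρ dρ with
  | name x =>
    cases x with
    | bot => rfl
    | imp => rfl
    | var n σ => exact (h (n, σ) (by simp [fv])).symm
  | app s t ihs iht =>
    simp only [fv, Finset.mem_union] at h
    simp only [substAux, toDB, DB.subst]
    rw [ihs fun p hp => h p (.inl hp), iht fun p hp => h p (.inr hp)]
  | lam n σ s ih =>
    rw [substAux_lam]
    simp only [toDB, DB.subst]
    refine congrArg DB.lam (ih fun p hp => ?_)
    by_cases hpn : p = (n, σ)
    · subst hpn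
      simp [idx, DB.liftS, DB.consS, toDB, vr]
    · have hpe : p ∈ (fv s).erase (n, σ) := Finset.mem_erase.mpr ⟨hpn, hp⟩
      simp only [idx, if_neg hpn, Function.update_of_ne hpn, DB.liftS, DB.consS,
        Function.comp, toDB_cons Γ (freshN_not_mem_fv hpe σ)]
      rw [h p (by simpa [fv] using hpe)]

lemma toDB_subst (Γ : List (ℕ × Ty)) (s : Tm) (n : ℕ) (σ : Ty) (t : Tm) :
    toDB Γ (subst s n σ t) = DB.sub0 (toDB ((n, σ) :: Γ) s) (toDB Γ t) := by
  refine toDB_substAux s fun p _ => ?_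
  by_cases hpn : p = (n, σ)
  · subst hpn
    simp [idx, DB.consS]
  · simp [idx, hpn, DB.consS, toDB, vr]

inductive BetaStep : Tm → Tm → Prop
  | beta {n σ b t} : BetaStep (.app (.lam n σ b) t) (subst b n σ t)
  | lam {n σ s s'} : BetaStep s s' → BetaStep (.lam n σ s) (.lam n σ s')
  | appL {s s' t} : BetaStep s s' → BetaStep (.app s t) (.app s' t)
  | appR {s t t'} : BetaStep t t' → BetaStep (.app s t) (.app s t')

lemma BetaStep.toDB {s t : Tm} (h : BetaStep s t) (Γ : List (ℕ × Ty)) :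
    DB.Step (toDB Γ s) (toDB Γ t) := by
  induction h generalizing Γ with
  | beta => rw [toDB_subst]; exact .beta
  | lam _ ih => exact .lam (ih _)
  | appL _ ih => exact .appL (ih _)
  | appR _ ih => exact .appR (ih _)

/-- The fundamental lemma of reducibility. Inducting on the named typing derivation avoids a
typing judgment for de Bruijn terms. -/
lemma red_subst_toDB {s : Tm} {σ : Ty} (hs : HasTy s σ) (Γ : List (ℕ × Ty)) {ρ : ℕ → DB}
    (hρ : ∀ p : ℕ × Ty, DB.Red p.2 (ρ (idx Γ p))) : DB.Red σ ((toDB Γ s).subst ρ) := by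
  induction hs generalizing Γ ρ with
  | name x =>
    cases x with
    | bot => exact DB.red_const _
    | imp => exact DB.red_const _
    | var n τ => exact hρ (n, τ)
  | @lam n τ s υ _ ih =>
    have hbody : ∀ v, DB.Red τ v →
        DB.Red υ (DB.sub0 ((toDB ((n, τ) :: Γ) s).subst (DB.liftS ρ)) v) := by
      intro v hv
      rw [DB.sub0_subst_liftS]
      refine ih _ fun p => ?_
      by_cases hpn : p = (n, τ)
      · subst hpn; simpa [idx, DB.consS] using hv
      · simpa [idx, hpn, DB.consS] using hρ p
    exact DB.red_lam (DB.SN.of_subst (hbody _ (DB.red_bvar τ 0)).sn) hbody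
  | app _ _ ihf iha => exact ihf Γ hρ _ (iha Γ hρ)

theorem acc_betaStep {s : Tm} {σ : Ty} (hs : HasTy s σ) : Acc (flip BetaStep) s := by
  have hsn : DB.SN (toDB [] s) := by
    simpa using (red_subst_toDB hs [] fun p => DB.red_bvar p.2 _).sn
  exact Subrelation.accessible (fun h => h.toDB []) (InvImage.accessible (toDB []) hsn)

lemma IsSubstitution.update {ρ : ℕ × Ty → Tm} (hρ : IsSubstitution ρ) {n : ℕ} {σ : Ty} {t : Tm}
    (ht : HasTy t σ) : IsSubstitution (Function.update ρ (n, σ) t) := by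
  intro k κ
  by_cases h : (k, κ) = (n, σ)
  · obtain ⟨rfl, rfl⟩ := Prod.mk.inj h
    simpa using ht
  · simpa [Function.update_of_ne h] using hρ k κ

lemma HasTy.substAux {s : Tm} {τ : Ty} (hs : HasTy s τ) {ρ : ℕ × Ty → Tm}
    (hρ : IsSubstitution ρ) : HasTy (substAux ρ s) τ := by
  induction hs generalizing ρ with
  | name x =>
    cases x with
    | bot => exact .name .bot
    | imp => exact .name .imp
    | var n σ => exact hρ n σ
  | lam _ ih => exact .lam (ih (hρ.update (.name _)))
  | app _ _ ihf iha => exact .app (ihf hρ) (iha hρ)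

lemma HasTy.subst {b t : Tm} {n : ℕ} {σ τ : Ty} (hb : HasTy b τ) (ht : HasTy t σ) :
    HasTy (subst b n σ t) τ :=
  hb.substAux (IsSubstitution.update (fun _ _ => .name _) ht)

lemma BetaStep.hasTy {s t : Tm} (h : BetaStep s t) {τ : Ty} (hs : HasTy s τ) : HasTy t τ := by
  induction h generalizing τ with
  | beta =>
    cases hs with
    | app hf ha => cases hf with
      | lam hb => exact hb.subst ha
  | lam _ ih =>
    obtain _ | ⟨hb⟩ := hs
    exact .lam (ih hb)
  | appL _ ih =>
    obtain _ | _ | ⟨hf, ha⟩ := hs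
    exact .app (ih hf) ha
  | appR _ ih =>
    obtain _ | _ | ⟨hf, ha⟩ := hs
    exact .app hf (ih ha)

lemma fv_substAux_subset (s : Tm) (ρ : ℕ × Ty → Tm) :
    fv (substAux ρ s) ⊆ (fv s).biUnion (fun p => fv (ρ p)) := by
  induction s generalizing ρ with
  | name x =>
    cases x with
    | bot => simp [substAux, fv]
    | imp => simp [substAux, fv]
    | var n σ => simp [substAux, fv]
  | app s t ihs iht =>
    simp only [substAux, fv, Finset.union_biUnion]
    exact Finset.union_subset_union (ihs ρ) (iht ρ)
  | lam n σ s ih =>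
    intro q hq
    rw [substAux_lam, fv, Finset.mem_erase] at hq
    obtain ⟨p, hp, hqp⟩ := Finset.mem_biUnion.mp (ih _ hq.2)
    by_cases hpn : p = (n, σ)
    · subst hpn
      simp [vr, fv, hq.1] at hqp
    · rw [Function.update_of_ne hpn] at hqp
      exact Finset.mem_biUnion.mpr ⟨p, by simp [fv, hpn, hp], hqp⟩

lemma fv_subst_subset (b : Tm) (n : ℕ) (σ : Ty) (t : Tm) :
    fv (subst b n σ t) ⊆ (fv b).erase (n, σ) ∪ fv t := by
  intro q hq
  obtain ⟨p, hp, hqp⟩ := Finset.mem_biUnion.mp (fv_substAux_subset b _ hq)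
  by_cases hpn : p = (n, σ)
  · subst hpn
    simp_all
  · simp only [Function.update_of_ne hpn, vr, fv, Finset.mem_singleton] at hqp
    subst hqp
    exact Finset.mem_union_left _ (Finset.mem_erase.mpr ⟨hpn, hp⟩)

lemma BetaStep.fv_subset {s t : Tm} (h : BetaStep s t) : fv t ⊆ fv s := by
  induction h with
  | beta => exact fv_subst_subset _ _ _ _
  | lam _ ih => exact Finset.erase_subset_erase _ ih
  | appL _ ih => exact Finset.union_subset_union ih subset_rfl
  | appR _ ih => exact Finset.union_subset_union subset_rfl ih

lemma BetaStep.lamEq {s t : Tm} (h : BetaStep s t) {τ : Ty} (hs : HasTy s τ) : LamEq s t := by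
  induction h generalizing τ with
  | beta => exact .beta hs
  | @lam n σ _ _ _ ih =>
    obtain _ | ⟨hb⟩ := hs
    exact .ctx (.lam n σ .hole) (ih hb) (.lam hb)
  | @appL _ _ t _ ih =>
    obtain _ | _ | ⟨hf, ha⟩ := hs
    exact .ctx (.appL .hole t) (ih hf) (.app hf ha)
  | @appR s _ _ _ ih =>
    obtain _ | _ | ⟨hf, ha⟩ := hs
    exact .ctx (.appR s .hole) (ih ha) (.app hf ha)

lemma BetaStep.reflTransGen_invariant {s t : Tm} (h : Relation.ReflTransGen BetaStep s t)
    {τ : Ty} (hs : HasTy s τ) : HasTy t τ ∧ LamEq s t ∧ fv t ⊆ fv s := by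
  induction h with
  | refl => exact ⟨hs, .refl hs, subset_rfl⟩
  | tail _ hstep ih =>
    obtain ⟨ht, hst, hfv⟩ := ih
    exact ⟨hstep.hasTy ht, hst.trans (hstep.lamEq ht), hstep.fv_subset.trans hfv⟩

lemma exists_betaStep_fill {r : Tm} (hr : IsBetaRedex r) (C : Ctx) :
    ∃ t, BetaStep (C.fill r) t := by
  induction C with
  | hole =>
    match r, hr with
    | .app (.lam _ _ _) _, _ => exact ⟨_, .beta⟩
  | lam n σ C ih => obtain ⟨_, h⟩ := ih; exact ⟨_, .lam h⟩
  | appL C t ih => obtain ⟨_, h⟩ := ih; exact ⟨_, .appL h⟩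
  | appR t C ih => obtain ⟨_, h⟩ := ih; exact ⟨_, .appR h⟩

lemma betaNormal_of_forall_not_betaStep {s : Tm} (hs : ∀ t, ¬ BetaStep s t) : BetaNormal s := by
  rintro r ⟨C, rfl⟩ hr
  obtain ⟨t, ht⟩ := exists_betaStep_fill hr C
  exact hs t ht

/-- every well-typed term has a lambda-equivalent β-normal form
whose free variables occur free in the original term. -/
theorem beta_normal_form (s : Tm) (σ : Ty) (hs : HasTy s σ) :
    ∃ t : Tm, HasTy t σ ∧ LamEq s t ∧ BetaNormal t ∧ fv t ⊆ fv s := by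
  obtain ⟨t, hst, ht⟩ := (acc_betaStep hs).exists_reflTransGen_forall_not
  obtain ⟨htσ, hlam, hfv⟩ := BetaStep.reflTransGen_invariant hst hs
  exact ⟨t, htσ, hlam, betaNormal_of_forall_not_betaStep ht, hfv⟩

end PTT
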